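/- Let n = 2. The optimal approximation ratios admit the explicit expressions: R_V*(ρ,σ) = max({1} ∪ {1/f(ρ₂(s), ρ₁(s′)) : s ≺ s′}), R_C*(ρ,σ) = max({1} ∪ {f(1/ρ₂(s), 1/ρ₁(s′)) : s ≺ s′}), and R_D*(ρ,σ) = max({1} ∪ {min(1/ρ₂(s), 1/ρ₁(s′)) : s ≺ s′}), where each maximum ranges over the finitely many pairs of profiles s ≺ s′ in [k]×[k]. -/

import Mathlib

namespace Stmt18

variable {k : ℕ}

noncomputable def rho1 (v1 v2 : Fin k × Fin k → ℝ) (s : Fin k × Fin k) : ℝ :=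
  v1 s / max (v1 s) (v2 s)

noncomputable def rho2 (v1 v2 : Fin k × Fin k → ℝ) (s : Fin k × Fin k) : ℝ :=
  v2 s / max (v1 s) (v2 s)

/-- One step of the reachability relation. -/
def step (v1 v2 : Fin k × Fin k → ℝ) (p q : Fin k × Fin k) : Prop :=
  (p.2 = q.2 ∧ v1 p < v1 q) ∨ (p.1 = q.1 ∧ v2 q < v2 p)

/-- The conflict function `f`. -/
noncomputable def conflictF (u v : ℝ) : ℝ :=
  if u = 1 ∧ v = 1 then 1 else (u * v - 1) / (u + v - 2)

/-- Membership in the truthful polytope `T(σ)` (two agents). -/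
def InT (v1 v2 x1 x2 : Fin k × Fin k → ℝ) : Prop :=
  (∀ s, 0 ≤ x1 s ∧ x1 s ≤ 1) ∧ (∀ s, 0 ≤ x2 s ∧ x2 s ≤ 1) ∧
  (∀ s, x1 s + x2 s = 1) ∧
  (∀ a b c : Fin k, v1 (a, c) < v1 (b, c) → x1 (a, c) ≤ x1 (b, c)) ∧
  (∀ a c d : Fin k, v2 (a, c) < v2 (a, d) → x2 (a, c) ≤ x2 (a, d))

/-- The allocation rule is deterministic. -/
def Deterministic (x1 x2 : Fin k × Fin k → ℝ) : Prop :=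
  (∀ s, x1 s = 0 ∨ x1 s = 1) ∧ (∀ s, x2 s = 0 ∨ x2 s = 1)

/-- Value approximation ratio (two agents). -/
noncomputable def RV [NeZero k] (v1 v2 x1 x2 : Fin k × Fin k → ℝ) : ℝ :=
  Finset.univ.sup' Finset.univ_nonempty
    (fun s : Fin k × Fin k => (x1 s * rho1 v1 v2 s + x2 s * rho2 v1 v2 s)⁻¹)

/-- Cost approximation ratio (two agents). -/
noncomputable def RC [NeZero k] (v1 v2 x1 x2 : Fin k × Fin k → ℝ) : ℝ :=
  Finset.univ.sup' Finset.univ_nonempty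
    (fun s : Fin k × Fin k => x1 s / rho1 v1 v2 s + x2 s / rho2 v1 v2 s)

/-!
Write `x` for agent 1's share, agent 2 getting `1 - x`. Truthfulness says exactly that `x` is
monotone along the reachability relation, and at each profile `s` the requirement "ratio ≤ R" is
an interval constraint `lo s ≤ x s ≤ hi s`: `lo s` is the least share agent 1 must get because
agent 2 alone would be too inefficient at `s`, and `1 - hi s` the same for agent 2. A monotone
`x` between `lo` and `hi` exists iff `lo s ≤ hi s'` whenever `s'` is reachable from `s` (take the
least monotone majorant of `lo`). For `s ≺ s'` this inequality says precisely that the term of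
the pair `(s, s')` in the formula is at most `R`, and for `s = s'` that term is `1`, since at
every profile one agent is the efficient one. So `R` is achievable iff it bounds every term, and
the optimum is their maximum. Deterministic rules are handled the same way with shares in
`{0, 1}`.
-/

open Set Relation

section Interpolation

variable {P α : Type*} [ConditionallyCompleteLinearOrder α] {r : P → P → Prop}

theorem exists_between_monotone_iff [Finite P] (K : Set α) {lo hi : P → α}
    (hlo : ∀ s, lo s ∈ K) :
    (∃ x : P → α, (∀ s, x s ∈ K ∧ lo s ≤ x s ∧ x s ≤ hi s) ∧ ∀ s t, r s t → x s ≤ x t) ↔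
      ∀ s t, ReflTransGen r s t → lo s ≤ hi t := by
  constructor
  · rintro ⟨x, hx, hmono⟩ s t hst
    exact (hx s).2.1.trans
      ((reflTransGen_le_of_le le_rfl _ _ (hst.lift x hmono)).trans (hx t).2.2)
  · intro h
    have hne (s : P) : (lo '' {t | ReflTransGen r t s}).Nonempty := ⟨lo s, s, .refl, rfl⟩
    have hbdd (s : P) : BddAbove (lo '' {t | ReflTransGen r t s}) := (toFinite _).bddAbove
    refine ⟨fun s => sSup (lo '' {t | ReflTransGen r t s}), fun s => ⟨?_, ?_, ?_⟩,
      fun s t hst => csSup_le_csSup (hbdd t) (hne s) (image_mono fun u hu => hu.tail hst)⟩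
    · obtain ⟨t, -, ht⟩ := (hne s).csSup_mem (toFinite _)
      show sSup _ ∈ K
      rw [← ht]
      exact hlo t
    · exact le_csSup (hbdd s) ⟨s, .refl, rfl⟩
    · exact csSup_le (hne s) (forall_mem_image.2 fun t ht => h t s ht)

theorem forall_reflTransGen_iff_forall_transGen {p : P → P → Prop} (hp : ∀ s, p s s) :
    (∀ s t, ReflTransGen r s t → p s t) ↔ ∀ s t, TransGen r s t → p s t := by
  refine ⟨fun h s t hst => h s t hst.to_reflTransGen, fun h s t hst => ?_⟩
  rcases reflTransGen_iff_eq_or_transGen.1 hst with rfl | hst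
  exacts [hp _, h s t hst]

end Interpolation

theorem sInf_eq_sSup_of_bounds {P : Type*} [Finite P] {r : P → P → Prop}
    {g : P → P → ℝ} {A : Set ℝ} (hlow : ∀ a ∈ A, 1 ≤ a ∧ ∀ s t, r s t → g s t ≤ a)
    (hup : ∀ R, 1 ≤ R → (∀ s t, r s t → g s t ≤ R) → ∃ a ∈ A, a ≤ R) :
    sInf A = sSup ({1} ∪ {m | ∃ s t, r s t ∧ m = g s t}) := by
  set S : Set ℝ := {1} ∪ {m | ∃ s t, r s t ∧ m = g s t}
  have hS : BddAbove S := by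
    refine (((finite_range fun p : P × P => g p.1 p.2).insert 1).subset ?_).bddAbove
    rintro _ (rfl | ⟨s, t, -, rfl⟩)
    exacts [mem_insert _ _, mem_insert_of_mem _ ⟨(s, t), rfl⟩]
  have hA : ∀ a ∈ A, sSup S ≤ a := by
    refine fun a ha => csSup_le ⟨1, .inl rfl⟩ ?_
    rintro _ (rfl | ⟨s, t, hst, rfl⟩)
    exacts [(hlow a ha).1, (hlow a ha).2 s t hst]
  obtain ⟨a, ha, haS⟩ :=
    hup _ (le_csSup hS (.inl rfl)) fun s t hst => le_csSup hS (.inr ⟨s, t, hst, rfl⟩)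
  exact le_antisymm ((csInf_le ⟨_, hA⟩ ha).trans haS) (le_csInf ⟨a, ha⟩ hA)

section Shares

variable {a b c u v x θ R : ℝ}

theorem conflictF_pos (hu : 0 < u) (hu1 : u ≤ 1) (hv1 : v ≤ 1) :
    0 < conflictF u v := by
  unfold conflictF
  split_ifs with h
  · exact one_pos
  · have hlt : u < 1 ∨ v < 1 := by
      contrapose! h
      exact ⟨le_antisymm hu1 h.1, le_antisymm hv1 h.2⟩
    rcases hlt with hlt | hlt <;> exact div_pos_of_neg_of_neg (by nlinarith) (by linarith)

theorem conflictF_eq_one (h : u = 1 ∨ v = 1) : conflictF u v = 1 := by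
  unfold conflictF
  split_ifs with huv
  · rfl
  · rcases h with rfl | rfl
    · rw [one_mul, show 1 + v - 2 = v - 1 by ring, div_self (sub_ne_zero.2 fun h => huv ⟨rfl, h⟩)]
    · rw [mul_one, show u + 1 - 2 = u - 1 by ring, div_self (sub_ne_zero.2 fun h => huv ⟨h, rfl⟩)]

/-- The least `x ∈ [0, 1]` for which `x + (1 - x) * c` lies between `θ` and `1`, when `c` and `θ`
lie on the same side of `1`. At `c = 1` division by zero gives the right value `0`. -/
noncomputable def minShare (c θ : ℝ) : ℝ := max 0 ((θ - c) / (1 - c))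

theorem minShare_nonneg : 0 ≤ minShare c θ := le_max_left _ _

theorem minShare_one_left : minShare 1 θ = 0 := by simp [minShare]

theorem minShare_le_iff_of_le_one (hc : c ≤ 1) (hθ : θ ≤ 1) (hx : 0 ≤ x) :
    minShare c θ ≤ x ↔ θ ≤ x + (1 - x) * c := by
  rcases hc.lt_or_eq with hc | rfl
  · rw [minShare, max_le_iff, div_le_iff₀ (sub_pos.2 hc), and_iff_right hx]
    constructor <;> intro h <;> linarith
  · simpa [minShare_one_left, hx] using hθ

theorem minShare_le_iff_of_one_le (hc : 1 ≤ c) (hθ : 1 ≤ θ) (hx : 0 ≤ x) :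
    minShare c θ ≤ x ↔ x + (1 - x) * c ≤ θ := by
  rcases hc.lt_or_eq with hc | rfl
  · rw [minShare, max_le_iff, div_le_iff_of_neg (sub_neg.2 hc), and_iff_right hx]
    constructor <;> intro h <;> linarith
  · simpa [minShare_one_left, hx] using hθ

theorem minShare_le_one_of_le_one (hc : c ≤ 1) (hθ : θ ≤ 1) : minShare c θ ≤ 1 :=
  (minShare_le_iff_of_le_one hc hθ zero_le_one).2 (by linarith)

theorem minShare_le_one_of_one_le (hc : 1 ≤ c) (hθ : 1 ≤ θ) : minShare c θ ≤ 1 :=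
  (minShare_le_iff_of_one_le hc hθ zero_le_one).2 (by linarith)

theorem max_zero_add_max_zero_le_one_iff (ha : a ≤ 1) (hb : b ≤ 1) :
    max 0 a + max 0 b ≤ 1 ↔ a + b ≤ 1 := by
  rcases le_total a 0 with ha0 | ha0 <;> rcases le_total b 0 with hb0 | hb0 <;>
    simp only [max_eq_left, max_eq_right, ha0, hb0] <;> constructor <;> intro <;> linarith

theorem div_add_div_le_one_iff (h : 0 < (1 - u) * (1 - v)) :
    (θ - u) / (1 - u) + (θ - v) / (1 - v) ≤ 1 ↔ u * v - 1 ≤ θ * (u + v - 2) := by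
  have hu : 1 - u ≠ 0 := left_ne_zero_of_mul h.ne'
  have hv : 1 - v ≠ 0 := right_ne_zero_of_mul h.ne'
  rw [div_add_div _ _ hu hv, div_le_one h]
  constructor <;> intro <;> linarith

theorem minShare_add_minShare_le_one_iff_of_le_one (hu : u ≤ 1) (hv : v ≤ 1) (hθ : θ ≤ 1) :
    minShare u θ + minShare v θ ≤ 1 ↔ θ ≤ conflictF u v := by
  rcases hu.lt_or_eq with hu | rfl
  · rcases hv.lt_or_eq with hv | rfl
    · have hu' := sub_pos.2 hu
      have hv' := sub_pos.2 hv
      rw [minShare, minShare, max_zero_add_max_zero_le_one_iff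
          ((div_le_one hu').2 (by linarith)) ((div_le_one hv').2 (by linarith)),
        div_add_div_le_one_iff (mul_pos hu' hv'), conflictF, if_neg fun h => hu.ne h.1,
        le_div_iff_of_neg (by linarith)]
    · rw [minShare_one_left, add_zero, conflictF_eq_one (.inr rfl)]
      exact iff_of_true (minShare_le_one_of_le_one hu.le hθ) hθ
  · rw [minShare_one_left, zero_add, conflictF_eq_one (.inl rfl)]
    exact iff_of_true (minShare_le_one_of_le_one hv hθ) hθ

theorem minShare_add_minShare_le_one_iff_of_one_le (hu : 1 ≤ u) (hv : 1 ≤ v) (hθ : 1 ≤ θ) :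
    minShare u θ + minShare v θ ≤ 1 ↔ conflictF u v ≤ θ := by
  rcases hu.lt_or_eq with hu | rfl
  · rcases hv.lt_or_eq with hv | rfl
    · have hu' := sub_neg.2 hu
      have hv' := sub_neg.2 hv
      rw [minShare, minShare, max_zero_add_max_zero_le_one_iff
          ((div_le_one_of_neg hu').2 (by linarith)) ((div_le_one_of_neg hv').2 (by linarith)),
        div_add_div_le_one_iff (mul_pos_of_neg_of_neg hu' hv'), conflictF,
        if_neg fun h => hu.ne' h.1, div_le_iff₀ (by linarith)]
    · rw [minShare_one_left, add_zero, conflictF_eq_one (.inr rfl)]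
      exact iff_of_true (minShare_le_one_of_one_le hu.le hθ) hθ
  · rw [minShare_one_left, zero_add, conflictF_eq_one (.inl rfl)]
    exact iff_of_true (minShare_le_one_of_one_le hv hθ) hθ

theorem mix_pos (ha : 0 < a) (hb : 0 < b) (hx : x ∈ Icc 0 1) : 0 < x * a + (1 - x) * b := by
  nlinarith [mul_nonneg hx.1 (sub_nonneg.2 (min_le_left a b)), lt_min ha hb,
    mul_nonneg (sub_nonneg.2 hx.2) (sub_nonneg.2 (min_le_right a b))]

theorem one_le_inv_mix (ha : 0 < a) (ha1 : a ≤ 1) (hb : 0 < b) (hb1 : b ≤ 1) (hx : x ∈ Icc 0 1) :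
    1 ≤ (x * a + (1 - x) * b)⁻¹ :=
  (one_le_inv₀ (mix_pos ha hb hx)).2 (by nlinarith [hx.1, hx.2])

theorem one_le_mix (ha : 1 ≤ a) (hb : 1 ≤ b) (hx : x ∈ Icc 0 1) : 1 ≤ x * a + (1 - x) * b := by
  nlinarith [hx.1, hx.2]

theorem inv_mix_le_iff (ha : 0 < a) (ha1 : a ≤ 1) (hb : 0 < b) (hb1 : b ≤ 1) (hab : a = 1 ∨ b = 1)
    (hR : 1 ≤ R) (hx : x ∈ Icc 0 1) :
    (x * a + (1 - x) * b)⁻¹ ≤ R ↔ minShare b R⁻¹ ≤ x ∧ x ≤ 1 - minShare a R⁻¹ := by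
  have hθ : R⁻¹ ≤ 1 := inv_le_one_of_one_le₀ hR
  rw [inv_le_comm₀ (mix_pos ha hb hx) (by linarith)]
  rcases hab with rfl | rfl
  · rw [minShare_one_left, sub_zero, and_iff_left hx.2, minShare_le_iff_of_le_one hb1 hθ hx.1,
      mul_one]
  · rw [minShare_one_left, and_iff_right hx.1, le_sub_comm,
      minShare_le_iff_of_le_one ha1 hθ (sub_nonneg.2 hx.2)]
    constructor <;> intro <;> linarith

theorem mix_le_iff (ha : 1 ≤ a) (hb : 1 ≤ b) (hab : a = 1 ∨ b = 1) (hR : 1 ≤ R)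
    (hx : x ∈ Icc 0 1) :
    x * a + (1 - x) * b ≤ R ↔ minShare b R ≤ x ∧ x ≤ 1 - minShare a R := by
  rcases hab with rfl | rfl
  · rw [minShare_one_left, sub_zero, and_iff_left hx.2, minShare_le_iff_of_one_le hb hR hx.1,
      mul_one]
  · rw [minShare_one_left, and_iff_right hx.1, le_sub_comm,
      minShare_le_iff_of_one_le ha hR (sub_nonneg.2 hx.2)]
    constructor <;> intro <;> linarith

/-- The least `x ∈ {0, 1}` with `x + (1 - x) * c ≤ R`, when `1 ≤ R`. -/
noncomputable def minShareDet (c R : ℝ) : ℝ := if R < c then 1 else 0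

theorem minShareDet_mem : minShareDet c R ∈ ({0, 1} : Set ℝ) := by
  unfold minShareDet; split_ifs <;> simp

theorem minShareDet_add_minShareDet_le_one_iff :
    minShareDet u R + minShareDet v R ≤ 1 ↔ min u v ≤ R := by
  simp only [minShareDet, ← not_lt]
  split_ifs <;> norm_num [*]

theorem mix_le_iff_of_mem_pair (hx : x ∈ ({0, 1} : Set ℝ)) :
    x * a + (1 - x) * b ≤ R ↔ minShareDet b R ≤ x ∧ x ≤ 1 - minShareDet a R := by
  rcases hx with rfl | rfl <;> unfold minShareDet <;> split_ifs <;> norm_num <;> linarith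

end Shares

section Allocation

variable {v1 v2 : Fin k × Fin k → ℝ}

theorem rho1_pos (hv1 : ∀ s, 0 < v1 s) (s : Fin k × Fin k) : 0 < rho1 v1 v2 s :=
  div_pos (hv1 s) (lt_max_of_lt_left (hv1 s))

theorem rho2_pos (hv1 : ∀ s, 0 < v1 s) (hv2 : ∀ s, 0 < v2 s) (s : Fin k × Fin k) :
    0 < rho2 v1 v2 s :=
  div_pos (hv2 s) (lt_max_of_lt_left (hv1 s))

theorem rho1_le_one (hv1 : ∀ s, 0 < v1 s) (s : Fin k × Fin k) : rho1 v1 v2 s ≤ 1 :=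
  div_le_one_of_le₀ (le_max_left _ _) (le_max_of_le_left (hv1 s).le)

theorem rho2_le_one (hv1 : ∀ s, 0 < v1 s) (s : Fin k × Fin k) : rho2 v1 v2 s ≤ 1 :=
  div_le_one_of_le₀ (le_max_right _ _) (le_max_of_le_left (hv1 s).le)

theorem rho1_eq_one_or_rho2_eq_one (hv1 : ∀ s, 0 < v1 s) (hv2 : ∀ s, 0 < v2 s)
    (s : Fin k × Fin k) : rho1 v1 v2 s = 1 ∨ rho2 v1 v2 s = 1 := by
  rcases max_cases (v1 s) (v2 s) with ⟨h, -⟩ | ⟨h, -⟩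
  · exact .inl (by rw [rho1, h, div_self (hv1 s).ne'])
  · exact .inr (by rw [rho2, h, div_self (hv2 s).ne'])

theorem inT_iff {x1 x2 : Fin k × Fin k → ℝ} :
    InT v1 v2 x1 x2 ↔
      (∀ s, x1 s ∈ Icc 0 1) ∧ (∀ p q, step v1 v2 p q → x1 p ≤ x1 q) ∧ x2 = 1 - x1 := by
  constructor
  · rintro ⟨h01, -, hsum, hmono1, hmono2⟩
    refine ⟨h01, ?_, funext fun s => by simp [← hsum s]⟩
    rintro ⟨a, c⟩ ⟨b, d⟩ (⟨rfl : c = d, hlt⟩ | ⟨rfl : a = b, hlt⟩)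
    · exact hmono1 a b c hlt
    · linarith [hmono2 a d c hlt, hsum (a, c), hsum (a, d)]
  · rintro ⟨h01, hmono, rfl⟩
    refine ⟨h01, fun s => ?_, fun s => by simp, fun a b c h => hmono _ _ (.inl ⟨rfl, h⟩),
      fun a c d h => sub_le_sub_left (hmono (a, d) (a, c) (.inr ⟨rfl, h⟩)) 1⟩
    simpa using (h01 s).symm

theorem exists_inT_iff_forall_transGen (K : Set ℝ) (hK : K ⊆ Icc 0 1)
    {lo hi : Fin k × Fin k → ℝ} (hlo : ∀ s, lo s ∈ K)
    {Q : (Fin k × Fin k → ℝ) → (Fin k × Fin k → ℝ) → Prop}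
    (hQ : ∀ x, (∀ s, x s ∈ Icc 0 1) → (Q x (1 - x) ↔ ∀ s, x s ∈ K ∧ lo s ≤ x s ∧ x s ≤ hi s))
    {g : Fin k × Fin k → Fin k × Fin k → ℝ} {R : ℝ} (hg : ∀ s t, lo s ≤ hi t ↔ g s t ≤ R)
    (hdiag : ∀ s, g s s ≤ R) :
    (∃ x1 x2, InT v1 v2 x1 x2 ∧ Q x1 x2) ↔
      ∀ s t, TransGen (step v1 v2) s t → g s t ≤ R := by
  refine Iff.trans ?_ <| (exists_between_monotone_iff K hlo).trans <|
    (forall₂_congr fun s t => imp_congr_right fun _ => hg s t).trans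
      (forall_reflTransGen_iff_forall_transGen hdiag)
  constructor
  · rintro ⟨x1, x2, hT, hQx⟩
    obtain ⟨h01, hmono, rfl⟩ := inT_iff.1 hT
    exact ⟨x1, (hQ x1 h01).1 hQx, hmono⟩
  · rintro ⟨x, hx, hmono⟩
    have h01 (s : Fin k × Fin k) : x s ∈ Icc 0 1 := hK (hx s).1
    exact ⟨x, 1 - x, inT_iff.2 ⟨h01, hmono, rfl⟩, (hQ x h01).2 hx⟩

theorem deterministic_one_sub_iff {x : Fin k × Fin k → ℝ} :
    Deterministic x (1 - x) ↔ ∀ s, x s ∈ ({0, 1} : Set ℝ) := by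
  refine ⟨fun h => h.1, fun h => ⟨h, fun s => ?_⟩⟩
  rcases h s with h | h
  · exact .inr (by simp [h])
  · exact .inl (by simp [mem_singleton_iff.1 h])

variable [NeZero k]

theorem RV_one_sub_le_iff {x : Fin k × Fin k → ℝ} {R : ℝ} :
    RV v1 v2 x (1 - x) ≤ R ↔ ∀ s, (x s * rho1 v1 v2 s + (1 - x s) * rho2 v1 v2 s)⁻¹ ≤ R := by
  simp [RV, Finset.sup'_le_iff]

theorem RC_one_sub_le_iff {x : Fin k × Fin k → ℝ} {R : ℝ} :
    RC v1 v2 x (1 - x) ≤ R ↔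
      ∀ s, x s * (1 / rho1 v1 v2 s) + (1 - x s) * (1 / rho2 v1 v2 s) ≤ R := by
  simp [RC, Finset.sup'_le_iff, div_eq_mul_inv]

theorem one_le_RV (hv1 : ∀ s, 0 < v1 s) (hv2 : ∀ s, 0 < v2 s) {x1 x2 : Fin k × Fin k → ℝ}
    (h : InT v1 v2 x1 x2) : 1 ≤ RV v1 v2 x1 x2 := by
  obtain ⟨hx, -, rfl⟩ := inT_iff.1 h
  let s : Fin k × Fin k := (0, 0)
  exact (one_le_inv_mix (rho1_pos hv1 s) (rho1_le_one hv1 s) (rho2_pos hv1 hv2 s)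
    (rho2_le_one hv1 s) (hx s)).trans (RV_one_sub_le_iff.1 le_rfl s)

theorem one_le_RC (hv1 : ∀ s, 0 < v1 s) (hv2 : ∀ s, 0 < v2 s) {x1 x2 : Fin k × Fin k → ℝ}
    (h : InT v1 v2 x1 x2) : 1 ≤ RC v1 v2 x1 x2 := by
  obtain ⟨hx, -, rfl⟩ := inT_iff.1 h
  let s : Fin k × Fin k := (0, 0)
  exact (one_le_mix (one_le_one_div (rho1_pos hv1 s) (rho1_le_one hv1 s))
    (one_le_one_div (rho2_pos hv1 hv2 s) (rho2_le_one hv1 s)) (hx s)).trans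
      (RC_one_sub_le_iff.1 le_rfl s)

theorem exists_inT_RV_le_iff (hv1 : ∀ s, 0 < v1 s) (hv2 : ∀ s, 0 < v2 s) {R : ℝ} (hR : 1 ≤ R) :
    (∃ x1 x2, InT v1 v2 x1 x2 ∧ RV v1 v2 x1 x2 ≤ R) ↔
      ∀ s t, TransGen (step v1 v2) s t → 1 / conflictF (rho2 v1 v2 s) (rho1 v1 v2 t) ≤ R := by
  have hθ : R⁻¹ ≤ 1 := inv_le_one_of_one_le₀ hR
  refine exists_inT_iff_forall_transGen (Icc 0 1) subset_rfl
    (lo := fun s => minShare (rho2 v1 v2 s) R⁻¹) (hi := fun s => 1 - minShare (rho1 v1 v2 s) R⁻¹)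
    (fun s => ⟨minShare_nonneg, minShare_le_one_of_le_one (rho2_le_one hv1 s) hθ⟩)
    (fun x hx => ?_) (fun s t => ?_) (fun s => ?_)
  · rw [RV_one_sub_le_iff]
    refine forall_congr' fun s => ?_
    rw [and_iff_right (hx s)]
    exact inv_mix_le_iff (rho1_pos hv1 s) (rho1_le_one hv1 s) (rho2_pos hv1 hv2 s)
      (rho2_le_one hv1 s) (rho1_eq_one_or_rho2_eq_one hv1 hv2 s) hR (hx s)
  · rw [le_sub_iff_add_le, minShare_add_minShare_le_one_iff_of_le_one (rho2_le_one hv1 s)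
      (rho1_le_one hv1 t) hθ, one_div, inv_le_comm₀ (by linarith)
      (conflictF_pos (rho2_pos hv1 hv2 s) (rho2_le_one hv1 s) (rho1_le_one hv1 t))]
  · rw [conflictF_eq_one (rho1_eq_one_or_rho2_eq_one hv1 hv2 s).symm, div_one]
    exact hR

theorem exists_inT_RC_le_iff (hv1 : ∀ s, 0 < v1 s) (hv2 : ∀ s, 0 < v2 s) {R : ℝ} (hR : 1 ≤ R) :
    (∃ x1 x2, InT v1 v2 x1 x2 ∧ RC v1 v2 x1 x2 ≤ R) ↔
      ∀ s t, TransGen (step v1 v2) s t →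
        conflictF (1 / rho2 v1 v2 s) (1 / rho1 v1 v2 t) ≤ R := by
  have h1 (s) : 1 ≤ 1 / rho1 v1 v2 s := one_le_one_div (rho1_pos hv1 s) (rho1_le_one hv1 s)
  have h2 (s) : 1 ≤ 1 / rho2 v1 v2 s := one_le_one_div (rho2_pos hv1 hv2 s) (rho2_le_one hv1 s)
  have h12 (s) : 1 / rho1 v1 v2 s = 1 ∨ 1 / rho2 v1 v2 s = 1 := by
    rcases rho1_eq_one_or_rho2_eq_one hv1 hv2 s with h | h <;> simp [h]
  refine exists_inT_iff_forall_transGen (Icc 0 1) subset_rfl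
    (lo := fun s => minShare (1 / rho2 v1 v2 s) R)
    (hi := fun s => 1 - minShare (1 / rho1 v1 v2 s) R)
    (fun s => ⟨minShare_nonneg, minShare_le_one_of_one_le (h2 s) hR⟩)
    (fun x hx => ?_) (fun s t => ?_) (fun s => ?_)
  · rw [RC_one_sub_le_iff]
    refine forall_congr' fun s => ?_
    rw [and_iff_right (hx s)]
    exact mix_le_iff (h1 s) (h2 s) (h12 s) hR (hx s)
  · rw [le_sub_iff_add_le, minShare_add_minShare_le_one_iff_of_one_le (h2 s) (h1 t) hR]
  · rw [conflictF_eq_one (h12 s).symm]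
    exact hR

theorem exists_inT_deterministic_RC_le_iff (hv1 : ∀ s, 0 < v1 s) (hv2 : ∀ s, 0 < v2 s) {R : ℝ}
    (hR : 1 ≤ R) :
    (∃ x1 x2, InT v1 v2 x1 x2 ∧ Deterministic x1 x2 ∧ RC v1 v2 x1 x2 ≤ R) ↔
      ∀ s t, TransGen (step v1 v2) s t → min (1 / rho2 v1 v2 s) (1 / rho1 v1 v2 t) ≤ R := by
  refine exists_inT_iff_forall_transGen {0, 1} (by simp [insert_subset_iff])
    (lo := fun s => minShareDet (1 / rho2 v1 v2 s) R)
    (hi := fun s => 1 - minShareDet (1 / rho1 v1 v2 s) R)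
    (fun s => minShareDet_mem) (fun x _ => ?_) (fun s t => ?_) (fun s => ?_)
  · rw [deterministic_one_sub_iff, RC_one_sub_le_iff, ← forall_and]
    exact forall_congr' fun s => and_congr_right mix_le_iff_of_mem_pair
  · rw [le_sub_iff_add_le, minShareDet_add_minShareDet_le_one_iff]
  · rcases rho1_eq_one_or_rho2_eq_one hv1 hv2 s with h | h <;> simp [h, hR]

end Allocation

/-- explicit expressions of the optimal value, cost and deterministic
approximation ratios via conflicting pairs. -/
theorem stmt18 (k : ℕ) [NeZero k] (v1 v2 : Fin k × Fin k → ℝ)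
    (hv1 : ∀ s, 0 < v1 s) (hv2 : ∀ s, 0 < v2 s) :
    sInf {r | ∃ x1 x2, InT v1 v2 x1 x2 ∧ RV v1 v2 x1 x2 = r}
      = sSup ({1} ∪ {r | ∃ s s', Relation.TransGen (step v1 v2) s s' ∧
          r = 1 / conflictF (rho2 v1 v2 s) (rho1 v1 v2 s')}) ∧
    sInf {r | ∃ x1 x2, InT v1 v2 x1 x2 ∧ RC v1 v2 x1 x2 = r}
      = sSup ({1} ∪ {r | ∃ s s', Relation.TransGen (step v1 v2) s s' ∧
          r = conflictF (1 / rho2 v1 v2 s) (1 / rho1 v1 v2 s')}) ∧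
    sInf {r | ∃ x1 x2, InT v1 v2 x1 x2 ∧ Deterministic x1 x2 ∧ RC v1 v2 x1 x2 = r}
      = sSup ({1} ∪ {r | ∃ s s', Relation.TransGen (step v1 v2) s s' ∧
          r = min (1 / rho2 v1 v2 s) (1 / rho1 v1 v2 s')}) := by
  refine ⟨sInf_eq_sSup_of_bounds ?_ ?_, sInf_eq_sSup_of_bounds ?_ ?_,
    sInf_eq_sSup_of_bounds ?_ ?_⟩
  · rintro _ ⟨x1, x2, hx, rfl⟩
    have h1 := one_le_RV hv1 hv2 hx
    exact ⟨h1, (exists_inT_RV_le_iff hv1 hv2 h1).1 ⟨x1, x2, hx, le_rfl⟩⟩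
  · intro R hR hg
    obtain ⟨x1, x2, hx, hle⟩ := (exists_inT_RV_le_iff hv1 hv2 hR).2 hg
    exact ⟨_, ⟨x1, x2, hx, rfl⟩, hle⟩
  · rintro _ ⟨x1, x2, hx, rfl⟩
    have h1 := one_le_RC hv1 hv2 hx
    exact ⟨h1, (exists_inT_RC_le_iff hv1 hv2 h1).1 ⟨x1, x2, hx, le_rfl⟩⟩
  · intro R hR hg
    obtain ⟨x1, x2, hx, hle⟩ := (exists_inT_RC_le_iff hv1 hv2 hR).2 hg
    exact ⟨_, ⟨x1, x2, hx, rfl⟩, hle⟩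
  · rintro _ ⟨x1, x2, hx, hd, rfl⟩
    have h1 := one_le_RC hv1 hv2 hx
    exact ⟨h1, (exists_inT_deterministic_RC_le_iff hv1 hv2 h1).1 ⟨x1, x2, hx, hd, le_rfl⟩⟩
  · intro R hR hg
    obtain ⟨x1, x2, hx, hd, hle⟩ := (exists_inT_deterministic_RC_le_iff hv1 hv2 hR).2 hg
    exact ⟨_, ⟨x1, x2, hx, hd, rfl⟩, hle⟩

end Stmt18
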